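/- Let M be a transition matrix on a finite nonempty type σ and let P₀ be any probability vector. Then (Matrix.exp ℝ (t • M)).mulVec P₀ converges as t → ∞ to some stationary distribution of M. -/

import Mathlib

/-!
Complexify `M`. Gershgorin's theorem for `Mᵀ` (nonnegative off-diagonal entries, rows summing
to zero) puts every eigenvalue in a disc centred at some `M k k ≤ 0` of radius `-M k k`, so each
eigenvalue is `0` or has negative real part. On a generalized eigenspace with `Re μ < 0` the flow
`exp (t • M) u` is `e^{tμ}` times a polynomial in `t` and tends to `0`. For `t ≥ 0` the matrix
`exp (t • M)` is column stochastic, so the flow is bounded, which forces the generalized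
eigenspace of `0` to be the kernel of `M`, where the flow is constant. Summing over the
generalized eigenspaces, the flow converges to a vector of `ker M`, and a limit of probability
vectors is one.
-/

open Filter Topology NormedSpace

theorem Complex.tendsto_exp_mul_mul_pow_atTop_zero {μ : ℂ} (hμ : μ.re < 0) (n : ℕ) :
    Tendsto (fun t : ℝ => Complex.exp (t * μ) * (t : ℂ) ^ n) atTop (𝓝 0) := by
  rw [tendsto_zero_iff_norm_tendsto_zero]
  refine (tendsto_rpow_mul_exp_neg_mul_atTop_nhds_zero n (-μ.re) (neg_pos.mpr hμ)).congr' ?_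
  filter_upwards [eventually_ge_atTop 0] with t ht
  rw [norm_mul, Complex.norm_exp, Complex.re_ofReal_mul, norm_pow, Complex.norm_real,
    Real.norm_of_nonneg ht, Real.rpow_natCast, mul_comm]
  ring_nf

theorem Complex.eq_zero_or_re_neg_of_norm_sub_le {μ : ℂ} {d : ℝ} (h : ‖μ - d‖ ≤ -d) :
    μ = 0 ∨ μ.re < 0 := by
  refine (lt_or_ge μ.re 0).symm.imp (fun hre => ?_) id
  have hd : d ≤ 0 := by linarith [norm_nonneg (μ - d)]
  have hsq : (μ.re - d) ^ 2 + μ.im ^ 2 ≤ d ^ 2 := by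
    have := pow_le_pow_left₀ (norm_nonneg _) h 2
    rwa [Complex.sq_norm, Complex.normSq_apply, neg_sq, Complex.sub_re, Complex.sub_im,
      Complex.ofReal_re, Complex.ofReal_im, sub_zero, ← sq, ← sq] at this
  apply Complex.ext <;> simp only [Complex.zero_re, Complex.zero_im] <;>
    nlinarith [sq_nonneg μ.im, sq_nonneg μ.re]

namespace Matrix

variable {σ : Type*} [Fintype σ] [DecidableEq σ] {𝕂 : Type*} [RCLike 𝕂]

theorem exp_series_hasSum_exp (A : Matrix σ σ 𝕂) :
    HasSum (fun n : ℕ => (n.factorial⁻¹ : 𝕂) • A ^ n) (exp A) := by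
  open scoped Matrix.Norms.Operator in
  exact exp_series_hasSum_exp' A

theorem exp_smul_one (a : 𝕂) : exp (a • (1 : Matrix σ σ 𝕂)) = exp a • 1 := by
  refine (exp_series_hasSum_exp _).unique ?_
  simpa [smul_pow, smul_smul] using
    (exp_series_hasSum_exp' (𝕂 := 𝕂) a).smul_const (1 : Matrix σ σ 𝕂)

theorem exp_add_smul_one (A : Matrix σ σ 𝕂) (a : 𝕂) : exp (A + a • 1) = exp a • exp A := by
  rw [exp_add_of_commute _ _ ((Commute.one_right A).smul_right a), exp_smul_one, mul_smul_one]

theorem exp_mulVec_eq_sum_of_pow_mulVec_eq_zero (A : Matrix σ σ 𝕂) {v : σ → 𝕂} {k : ℕ}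
    (hv : A ^ k *ᵥ v = 0) :
    exp A *ᵥ v = ∑ n ∈ Finset.range k, (n.factorial⁻¹ : 𝕂) • (A ^ n *ᵥ v) := by
  have hseries : HasSum (fun n : ℕ => ((n.factorial⁻¹ : 𝕂) • A ^ n) *ᵥ v) (exp A *ᵥ v) :=
    (exp_series_hasSum_exp A).map (mulVec.addMonoidHomLeft v)
      (continuous_id.matrix_mulVec continuous_const)
  simp only [smul_mulVec] at hseries
  refine hseries.unique (hasSum_sum_of_ne_finset_zero fun n hn => ?_)
  obtain ⟨m, rfl⟩ := Nat.exists_eq_add_of_le' (not_lt.mp (Finset.mem_range.not.mp hn))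
  rw [pow_add, ← mulVec_mulVec, hv, mulVec_zero, smul_zero]

theorem exp_mulVec_of_pow_sub_smul_mulVec_eq_zero (A : Matrix σ σ 𝕂) (μ : 𝕂) {v : σ → 𝕂} {k : ℕ}
    (hv : (A - μ • 1) ^ k *ᵥ v = 0) :
    exp A *ᵥ v = exp μ • ∑ n ∈ Finset.range k, (n.factorial⁻¹ : 𝕂) • ((A - μ • 1) ^ n *ᵥ v) := by
  rw [← exp_mulVec_eq_sum_of_pow_mulVec_eq_zero _ hv, ← smul_mulVec, ← exp_add_smul_one,
    sub_add_cancel]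

theorem exp_mulVec_of_mulVec_eq_zero {A : Matrix σ σ 𝕂} {v : σ → 𝕂} (hv : A *ᵥ v = 0) :
    exp A *ᵥ v = v := by
  simpa using exp_mulVec_eq_sum_of_pow_mulVec_eq_zero A (k := 1) (by simpa using hv)

theorem vecMul_exp_of_vecMul_eq_zero {A : Matrix σ σ 𝕂} {v : σ → 𝕂} (hv : v ᵥ* A = 0) :
    v ᵥ* exp A = v := by
  rw [← mulVec_transpose, ← exp_transpose]
  exact exp_mulVec_of_mulVec_eq_zero (by rwa [mulVec_transpose])

theorem exp_apply_nonneg {A : Matrix σ σ ℝ} (hA : ∀ i j, 0 ≤ A i j) (i j : σ) :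
    0 ≤ exp A i j := by
  have hentry : HasSum (fun n : ℕ => (n.factorial⁻¹ : ℝ) * (A ^ n) i j) (exp A i j) :=
    Pi.hasSum.mp (Pi.hasSum.mp (exp_series_hasSum_exp A) i) j
  exact hentry.nonneg fun n => mul_nonneg (by positivity) (pow_apply_nonneg hA n i j)

theorem exp_map_ofReal (A : Matrix σ σ ℝ) :
    exp (A.map ((↑) : ℝ → ℂ)) = (exp A).map (↑) := by
  have hcont : Continuous (Complex.ofRealHom.mapMatrix : Matrix σ σ ℝ →+* Matrix σ σ ℂ) :=
    Continuous.matrix_map continuous_id Complex.continuous_ofReal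
  refine (exp_series_hasSum_exp (A.map ((↑) : ℝ → ℂ))).unique ?_
  convert (exp_series_hasSum_exp A).map Complex.ofRealHom.mapMatrix.toAddMonoidHom hcont using 1
  · ext n : 1
    rw [Function.comp_apply, RingHom.toAddMonoidHom_eq_coe, AddMonoidHom.coe_coe,
      show A.map ((↑) : ℝ → ℂ) = Complex.ofRealHom.mapMatrix A from rfl, ← map_pow]
    ext i j
    simp
  · rfl

theorem norm_map_ofReal_mulVec_le {P : Matrix σ σ ℝ} (hP : P ∈ colStochastic ℝ σ) (u : σ → ℂ) :
    ‖P.map (↑) *ᵥ u‖ ≤ ∑ j, ‖u j‖ := by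
  refine pi_norm_le_iff_of_nonneg (by positivity) |>.mpr fun i => ?_
  refine (norm_sum_le _ _).trans (Finset.sum_le_sum fun j _ => ?_)
  change ‖((P i j : ℝ) : ℂ) * u j‖ ≤ ‖u j‖
  rw [norm_mul, Complex.norm_real, Real.norm_of_nonneg (hP.1 i j)]
  exact mul_le_of_le_one_left (norm_nonneg _) (le_one_of_mem_colStochastic hP)

theorem mulVec_mem_stdSimplex_of_mem_colStochastic {P : Matrix σ σ ℝ}
    (hP : P ∈ colStochastic ℝ σ) {x : σ → ℝ} (hx : x ∈ stdSimplex ℝ σ) :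
    P *ᵥ x ∈ stdSimplex ℝ σ :=
  ⟨nonneg_mulVec_of_mem_colStochastic hP hx.1, (sum_mulVec_of_mem_colStochastic hP).trans hx.2⟩

theorem exp_real_smul_mulVec_eq_sum {A : Matrix σ σ ℂ} {μ : ℂ} {k : ℕ} {v : σ → ℂ}
    (hv : (A - μ • 1) ^ k *ᵥ v = 0) (t : ℝ) :
    exp (t • A) *ᵥ v = ∑ n ∈ Finset.range k,
      (Complex.exp (t * μ) * (t : ℂ) ^ n) • ((n.factorial⁻¹ : ℂ) • ((A - μ • 1) ^ n *ᵥ v)) := by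
  have hsub : t • A - ((t : ℂ) * μ) • 1 = (t : ℂ) • (A - μ • 1) := by
    rw [smul_sub, smul_smul, ← Complex.coe_smul]
  have hv' : (t • A - ((t : ℂ) * μ) • 1) ^ k *ᵥ v = 0 := by
    rw [hsub, smul_pow, smul_mulVec, hv, smul_zero]
  rw [exp_mulVec_of_pow_sub_smul_mulVec_eq_zero _ _ hv', hsub, ← Complex.exp_eq_exp_ℂ,
    Finset.smul_sum]
  refine Finset.sum_congr rfl fun n _ => ?_
  rw [smul_pow, smul_mulVec, smul_comm _ ((t : ℂ) ^ n), smul_smul, smul_smul]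

theorem mulVec_eq_zero_of_mulVec_mulVec_eq_zero_of_bounded {A : Matrix σ σ ℂ} {u : σ → ℂ}
    {C : ℝ} (hbdd : ∀ t : ℝ, 0 ≤ t → ‖exp (t • A) *ᵥ u‖ ≤ C) (h : A *ᵥ (A *ᵥ u) = 0) :
    A *ᵥ u = 0 := by
  have hflow : ∀ t : ℝ, exp (t • A) *ᵥ u = u + (t : ℂ) • (A *ᵥ u) := fun t => by
    simpa [Finset.sum_range_succ] using
      exp_real_smul_mulVec_eq_sum (μ := 0) (k := 2) (by simpa [sq, ← mulVec_mulVec] using h) t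
  have hlin : ∀ t : ℝ, 0 ≤ t → t * ‖A *ᵥ u‖ ≤ C + ‖u‖ := fun t ht => by
    have hle := hbdd t ht
    have := norm_sub_le (exp (t • A) *ᵥ u) u
    rw [hflow] at hle this
    rw [add_sub_cancel_left, norm_smul, Complex.norm_real, Real.norm_of_nonneg ht] at this
    linarith
  by_contra hne
  obtain ⟨t, hgt, ht⟩ := (((tendsto_id.atTop_mul_const (norm_pos_iff.mpr hne)).eventually_gt_atTop
    (C + ‖u‖)).and (eventually_ge_atTop 0)).exists
  exact (hlin t ht).not_gt hgt

theorem mulVec_eq_zero_of_pow_mulVec_eq_zero_of_bounded {A : Matrix σ σ ℂ}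
    (hbdd : ∀ u : σ → ℂ, ∃ C, ∀ t : ℝ, 0 ≤ t → ‖exp (t • A) *ᵥ u‖ ≤ C) {k : ℕ} {u : σ → ℂ}
    (h : A ^ k *ᵥ u = 0) : A *ᵥ u = 0 := by
  induction k generalizing u with
  | zero => rw [pow_zero, one_mulVec] at h; rw [h, mulVec_zero]
  | succ k ih =>
    obtain ⟨C, hC⟩ := hbdd u
    exact mulVec_eq_zero_of_mulVec_mulVec_eq_zero_of_bounded hC
      (ih (by rwa [mulVec_mulVec, ← pow_succ]))

theorem tendsto_exp_real_smul_mulVec_of_re_neg {A : Matrix σ σ ℂ} {μ : ℂ} (hμ : μ.re < 0) {k : ℕ}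
    {v : σ → ℂ} (hv : (A - μ • 1) ^ k *ᵥ v = 0) :
    Tendsto (fun t : ℝ => exp (t • A) *ᵥ v) atTop (𝓝 0) := by
  simp_rw [exp_real_smul_mulVec_eq_sum hv]
  simpa using tendsto_finsetSum (Finset.range k) fun n _ =>
    (Complex.tendsto_exp_mul_mul_pow_atTop_zero hμ n).smul_const
      ((n.factorial⁻¹ : ℂ) • ((A - μ • 1) ^ n *ᵥ v))

theorem exists_tendsto_exp_real_smul_mulVec_of_mem_maxGenEigenspace {A : Matrix σ σ ℂ}
    (hbdd : ∀ u : σ → ℂ, ∃ C, ∀ t : ℝ, 0 ≤ t → ‖exp (t • A) *ᵥ u‖ ≤ C)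
    (hspec : ∀ μ, Module.End.HasEigenvalue (toLin' A) μ → μ = 0 ∨ μ.re < 0) {μ : ℂ} {u : σ → ℂ}
    (hu : u ∈ Module.End.maxGenEigenspace (toLin' A) μ) :
    ∃ w, A *ᵥ w = 0 ∧ Tendsto (fun t : ℝ => exp (t • A) *ᵥ u) atTop (𝓝 w) := by
  rcases eq_or_ne u 0 with rfl | hu0
  · exact ⟨0, mulVec_zero _, by simp⟩
  obtain ⟨k, hk⟩ := (Module.End.mem_maxGenEigenspace _ _ _).mp hu
  have hk' : (A - μ • 1) ^ k *ᵥ u = 0 := by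
    rwa [show (toLin' A - μ • 1) ^ k = toLin' ((A - μ • 1) ^ k) by
      rw [toLin'_pow, map_sub, map_smul, toLin'_one]; rfl, toLin'_apply] at hk
  have hμ : Module.End.HasEigenvalue (toLin' A) μ :=
    (Module.End.hasUnifEigenvalue_iff_hasUnifEigenvalue_one (by simp)).mp
      ((Submodule.ne_bot_iff _).mpr ⟨u, hu, hu0⟩)
  rcases hspec μ hμ with rfl | hre
  · have hAu : A *ᵥ u = 0 :=
      mulVec_eq_zero_of_pow_mulVec_eq_zero_of_bounded hbdd (by simpa using hk')
    refine ⟨u, hAu, tendsto_const_nhds.congr fun t => ?_⟩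
    rw [exp_mulVec_of_mulVec_eq_zero (by rw [smul_mulVec, hAu, smul_zero])]
  · exact ⟨0, mulVec_zero _, tendsto_exp_real_smul_mulVec_of_re_neg hre hk'⟩

theorem exists_tendsto_exp_real_smul_mulVec {A : Matrix σ σ ℂ}
    (hbdd : ∀ u : σ → ℂ, ∃ C, ∀ t : ℝ, 0 ≤ t → ‖exp (t • A) *ᵥ u‖ ≤ C)
    (hspec : ∀ μ, Module.End.HasEigenvalue (toLin' A) μ → μ = 0 ∨ μ.re < 0) (u : σ → ℂ) :
    ∃ w, A *ᵥ w = 0 ∧ Tendsto (fun t : ℝ => exp (t • A) *ᵥ u) atTop (𝓝 w) := by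
  have hu : u ∈ ⨆ μ, Module.End.maxGenEigenspace (toLin' A) μ := by
    rw [Module.End.iSup_maxGenEigenspace_eq_top]
    trivial
  induction hu using Submodule.iSup_induction' with
  | mem μ u hu => exact exists_tendsto_exp_real_smul_mulVec_of_mem_maxGenEigenspace hbdd hspec hu
  | zero => exact ⟨0, mulVec_zero _, by simp⟩
  | add u v _ _ hu hv =>
    obtain ⟨w, hw, hlim⟩ := hu
    obtain ⟨w', hw', hlim'⟩ := hv
    exact ⟨w + w', by rw [mulVec_add, hw, hw', add_zero],
      by simpa [mulVec_add] using hlim.add hlim'⟩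

section RateMatrix

variable {M : Matrix σ σ ℝ}

theorem exp_smul_apply_nonneg (hoff : ∀ i j, i ≠ j → 0 ≤ M i j) {t : ℝ} (ht : 0 ≤ t)
    (i j : σ) : 0 ≤ exp (t • M) i j := by
  -- `M + c • 1` is entrywise nonnegative and `exp (t • M) = e^{-tc} • exp (t • (M + c • 1))`.
  set c := ∑ k, |M k k|
  have hshift : ∀ i j, 0 ≤ (t • (M + c • 1)) i j := by
    intro i j
    refine mul_nonneg ht ?_
    rcases eq_or_ne i j with rfl | hij
    · have := Finset.single_le_sum (fun k _ => abs_nonneg (M k k)) (Finset.mem_univ i)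
      simp only [add_apply, smul_apply, one_apply_eq, smul_eq_mul, mul_one]
      linarith [neg_abs_le (M i i)]
    · simpa [one_apply_ne hij] using hoff i j hij
  have hsplit : t • M = t • (M + c • 1) + (-(t * c)) • (1 : Matrix σ σ ℝ) := by module
  rw [hsplit, exp_add_smul_one, smul_apply, ← Real.exp_eq_exp_ℝ, smul_eq_mul]
  exact mul_nonneg (Real.exp_pos _).le (exp_apply_nonneg hshift i j)

theorem exp_smul_mem_colStochastic (hoff : ∀ i j, i ≠ j → 0 ≤ M i j)
    (hcol : ∀ j, ∑ i, M i j = 0) {t : ℝ} (ht : 0 ≤ t) : exp (t • M) ∈ colStochastic ℝ σ := by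
  refine ⟨exp_smul_apply_nonneg hoff ht, vecMul_exp_of_vecMul_eq_zero ?_⟩
  ext j
  simp [vecMul, dotProduct, ← Finset.mul_sum, hcol]

theorem eq_zero_or_re_neg_of_hasEigenvalue (hoff : ∀ i j, i ≠ j → 0 ≤ M i j)
    (hcol : ∀ j, ∑ i, M i j = 0) {μ : ℂ}
    (hμ : Module.End.HasEigenvalue (toLin' (M.map ((↑) : ℝ → ℂ))) μ) : μ = 0 ∨ μ.re < 0 := by
  have hμT : Module.End.HasEigenvalue (toLin' (M.map ((↑) : ℝ → ℂ))ᵀ) μ := by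
    rwa [Module.End.hasEigenvalue_iff_isRoot_charpoly, charpoly_toLin',
      charpoly_transpose, ← charpoly_toLin', ← Module.End.hasEigenvalue_iff_isRoot_charpoly]
  obtain ⟨k, hk⟩ := eigenvalue_mem_ball hμT
  have hradius : ∑ j ∈ Finset.univ.erase k, ‖(M.map ((↑) : ℝ → ℂ))ᵀ k j‖ = -M k k := by
    rw [eq_neg_iff_add_eq_zero, ← hcol k, ← Finset.sum_erase_add _ _ (Finset.mem_univ k)]
    refine congrArg (· + M k k) (Finset.sum_congr rfl fun j hj => ?_)
    rw [transpose_apply, map_apply, Complex.norm_real,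
      Real.norm_of_nonneg (hoff j k (Finset.ne_of_mem_erase hj))]
  rw [Metric.mem_closedBall, hradius, dist_eq_norm, transpose_apply, map_apply] at hk
  exact Complex.eq_zero_or_re_neg_of_norm_sub_le hk

theorem exists_tendsto_exp_smul_mulVec (hoff : ∀ i j, i ≠ j → 0 ≤ M i j)
    (hcol : ∀ j, ∑ i, M i j = 0) (v : σ → ℝ) :
    ∃ P, M *ᵥ P = 0 ∧ Tendsto (fun t : ℝ => exp (t • M) *ᵥ v) atTop (𝓝 P) := by
  have hmap : ∀ t : ℝ, exp (t • M.map ((↑) : ℝ → ℂ)) = (exp (t • M)).map (↑) := fun t => by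
    rw [← exp_map_ofReal]
    congr 1
    ext
    simp
  have hbdd (u : σ → ℂ) : ∃ C, ∀ t : ℝ, 0 ≤ t → ‖exp (t • M.map ((↑) : ℝ → ℂ)) *ᵥ u‖ ≤ C :=
    ⟨∑ j, ‖u j‖, fun t ht =>
      hmap t ▸ norm_map_ofReal_mulVec_le (exp_smul_mem_colStochastic hoff hcol ht) u⟩
  obtain ⟨w, hw, hlim⟩ := exists_tendsto_exp_real_smul_mulVec hbdd
    (fun _ => eq_zero_or_re_neg_of_hasEigenvalue hoff hcol) (fun i => (v i : ℂ))
  refine ⟨fun i => (w i).re, ?_, ?_⟩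
  · ext i
    simpa [mulVec, dotProduct, Complex.re_sum] using congrArg Complex.re (congrFun hw i)
  · have hre : Continuous fun x : σ → ℂ => fun i => (x i).re := by fun_prop
    refine (hre.tendsto w |>.comp hlim).congr fun t => ?_
    ext i
    simp [hmap, mulVec, dotProduct]

end RateMatrix

end Matrix

theorem solution_tendsto_some_stationary_general
    {σ : Type*} [Fintype σ] [DecidableEq σ]
    (M : Matrix σ σ ℝ)
    (hMoff : ∀ i j : σ, i ≠ j → 0 ≤ M i j)
    (hMcol : ∀ j : σ, ∑ i, M i j = 0)
    (P₀ : σ → ℝ) (hP₀nonneg : ∀ i, 0 ≤ P₀ i) (hP₀sum : ∑ i, P₀ i = 1) :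
    ∃ P : σ → ℝ, (∀ i, 0 ≤ P i) ∧ (∑ i, P i = 1) ∧ M.mulVec P = 0 ∧
      Tendsto (fun t : ℝ => (NormedSpace.exp (t • M)).mulVec P₀) atTop (𝓝 P) := by
  obtain ⟨P, hstat, hlim⟩ := Matrix.exists_tendsto_exp_smul_mulVec hMoff hMcol P₀
  have hsimplex : P ∈ stdSimplex ℝ σ := (isClosed_stdSimplex ℝ σ).mem_of_tendsto hlim <|
    (eventually_ge_atTop 0).mono fun t ht => Matrix.mulVec_mem_stdSimplex_of_mem_colStochastic
      (Matrix.exp_smul_mem_colStochastic hMoff hMcol ht) ⟨hP₀nonneg, hP₀sum⟩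
  exact ⟨P, hsimplex.1, hsimplex.2, hstat, hlim⟩

/-- For any transition matrix `M` and any initial probability vector `P₀`,
the solution `exp(t M) P₀` of the master equation converges as `t → ∞` to some
stationary distribution of `M`.
(In this Mathlib version the matrix exponential `Matrix.exp ℝ` is `NormedSpace.exp ℝ`.) -/
theorem solution_tendsto_some_stationary
    {σ : Type*} [Fintype σ] [Nonempty σ] [DecidableEq σ]
    (M : Matrix σ σ ℝ)
    (hMoff : ∀ i j : σ, i ≠ j → 0 ≤ M i j)
    (hMcol : ∀ j : σ, ∑ i, M i j = 0)
    (P₀ : σ → ℝ) (hP₀nonneg : ∀ i, 0 ≤ P₀ i) (hP₀sum : ∑ i, P₀ i = 1) :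
    ∃ P : σ → ℝ, (∀ i, 0 ≤ P i) ∧ (∑ i, P i = 1) ∧ M.mulVec P = 0 ∧
      Tendsto (fun t : ℝ => (NormedSpace.exp (t • M)).mulVec P₀) atTop (𝓝 P) :=
  solution_tendsto_some_stationary_general M hMoff hMcol P₀ hP₀nonneg hP₀sum
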